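/- Each step of the mix-elimination procedure for the sequent system 𝒥 preserves the translation t into the free bicartesian closed category ℬ: if a proof π is transformed into a proof π′ by one reduction step of the procedure, then t(π) = t(π′) holds in ℬ. -/

import Mathlib

namespace JSys

/-! ### The sequent system `𝒥` for intuitionistic propositional logic -/

/-- formulae, generated from a countable set of propositional letters by `⊤`, `⊥`,
`∧`, `∨`, `→` -/
inductive Fml : Type
  | pl : ℕ → Fml
  | top : Fml
  | bot : Fml
  | and : Fml → Fml → Fml
  | or : Fml → Fml → Fml
  | imp : Fml → Fml → Fml
deriving DecidableEq

/-- `∧`-contexts -/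
inductive Ctx : Type
  | box : Ctx
  | conL : Ctx → Fml → Ctx
  | conR : Fml → Ctx → Ctx
  | conB : Ctx → Ctx → Ctx

/-- substitution of a formula for every occurrence of `□` in a `∧`-context -/
def Ctx.fill : Ctx → Fml → Fml
  | .box, A => A
  | .conL G B, A => (G.fill A).and B
  | .conR B G, A => B.and (G.fill A)
  | .conB G H, A => (G.fill A).and (H.fill A)

/-- the number of occurrences of `□` in a `∧`-context; a `∧₁`-context is a
`∧`-context `F` with `F.boxes = 1` -/
def Ctx.boxes : Ctx → ℕ
  | .box => 1
  | .conL G _ => G.boxes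
  | .conR _ G => G.boxes
  | .conB G H => G.boxes + H.boxes

/-- substitution of a `∧`-context for every occurrence of `□` in a `∧`-context -/
def Ctx.subst : Ctx → Ctx → Ctx
  | .box, K => K
  | .conL G A, K => .conL (G.subst K) A
  | .conR A G, K => .conR A (G.subst K)
  | .conB G H, K => .conB (G.subst K) (H.subst K)

theorem Ctx.subst_fill (G K : Ctx) (X : Fml) :
    (G.subst K).fill X = G.fill (K.fill X) := by
  induction G <;> simp [Ctx.subst, Ctx.fill, *]

/-- Proofs of the sequent system `𝒥`.  A proof of the sequent `A ⊢ B` is a term of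
type `JPf A B`.  The axioms are `a_A : A ⊢ A` and `Π_A : ⊥ ⊢ A`; the structural
rules (for `∧₁`-contexts `F`, witnessed by `F.boxes = 1`) are the two associativity
rules, commutativity `γ`, contraction `ω`, thinning `θ`, the unit rules `τ`, `τⁱ`,
and mix (for an arbitrary `∧`-context `G`); the rules for the connectives are `(∧)`,
`(◇)`, the two right `∨`-introductions, `(∗)` and `(▷)`. -/
inductive JPf : Fml → Fml → Type
  | ax (A : Fml) : JPf A A
  | exf (A : Fml) : JPf .bot A
  /-- `(β^→_F)`: from `F((A∧B)∧C) ⊢ D` infer `F(A∧(B∧C)) ⊢ D` -/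
  | bA (F : Ctx) (hF : F.boxes = 1) {A B C D : Fml} :
      JPf (F.fill ((A.and B).and C)) D → JPf (F.fill (A.and (B.and C))) D
  /-- `(β^←_F)`: from `F(A∧(B∧C)) ⊢ D` infer `F((A∧B)∧C) ⊢ D` -/
  | bB (F : Ctx) (hF : F.boxes = 1) {A B C D : Fml} :
      JPf (F.fill (A.and (B.and C))) D → JPf (F.fill ((A.and B).and C)) D
  /-- `(γ_F)` -/
  | perm (F : Ctx) (hF : F.boxes = 1) {A B C : Fml} :
      JPf (F.fill (A.and B)) C → JPf (F.fill (B.and A)) C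
  /-- `(ω_F)` -/
  | contr (F : Ctx) (hF : F.boxes = 1) {A B : Fml} :
      JPf (F.fill (A.and A)) B → JPf (F.fill A) B
  /-- `(θ^A_F)` -/
  | thin (F : Ctx) (hF : F.boxes = 1) (A : Fml) {B : Fml} :
      JPf (F.fill .top) B → JPf (F.fill A) B
  /-- `(τ_F)` -/
  | unitI (F : Ctx) (hF : F.boxes = 1) {A B : Fml} :
      JPf (F.fill A) B → JPf (F.fill (A.and .top)) B
  /-- `(τⁱ_F)` -/
  | unitE (F : Ctx) (hF : F.boxes = 1) {A B : Fml} :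
      JPf (F.fill (A.and .top)) B → JPf (F.fill A) B
  /-- mix -/
  | mix (G : Ctx) {A B C : Fml} : JPf A B → JPf (G.fill B) C → JPf (G.fill A) C
  /-- `(∧)` -/
  | andI {A B C D : Fml} : JPf A C → JPf B D → JPf (A.and B) (C.and D)
  /-- `(◇)` -/
  | orE {A B C D : Fml} : JPf (A.and C) D → JPf (B.and C) D → JPf ((A.or B).and C) D
  /-- `(∨ r₁)` -/
  | orI1 {A B : Fml} (C : Fml) : JPf A B → JPf A (B.or C)
  /-- `(∨ r₂)` -/
  | orI2 {A C : Fml} (B : Fml) : JPf A C → JPf A (B.or C)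
  /-- `(∗)` -/
  | star {A B C : Fml} : JPf (A.and B) C → JPf B (A.imp C)
  /-- `(▷)` -/
  | tri {A B C D E : Fml} : JPf A B → JPf (C.and D) E → JPf ((A.and (B.imp C)).and D) E

/-- a proof is mixless iff it contains no application of the rule mix -/
def MixFree : ∀ {A B : Fml}, JPf A B → Prop
  | _, _, .ax _ => True
  | _, _, .exf _ => True
  | _, _, .bA _ _ π => MixFree π
  | _, _, .bB _ _ π => MixFree π
  | _, _, .perm _ _ π => MixFree π
  | _, _, .contr _ _ π => MixFree π
  | _, _, .thin _ _ _ π => MixFree π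
  | _, _, .unitI _ _ π => MixFree π
  | _, _, .unitE _ _ π => MixFree π
  | _, _, .mix _ _ _ => False
  | _, _, .andI π₁ π₂ => MixFree π₁ ∧ MixFree π₂
  | _, _, .orE π₁ π₂ => MixFree π₁ ∧ MixFree π₂
  | _, _, .orI1 _ π => MixFree π
  | _, _, .orI2 _ π => MixFree π
  | _, _, .star π => MixFree π
  | _, _, .tri π₁ π₂ => MixFree π₁ ∧ MixFree π₂

/-! ### The free bicartesian closed category `ℬ` -/

/-- objects of the free bicartesian closed category, generated from the
propositional letters -/
inductive Obj : Type
  | pl : ℕ → Obj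
  | unit : Obj
  | zero : Obj
  | prod : Obj → Obj → Obj
  | coprod : Obj → Obj → Obj
  | exp : Obj → Obj → Obj
deriving DecidableEq

/-- Morphism terms of the free bicartesian closed category, generated from the
special morphisms by the operations `×`, `+`, `⇒` and `∘` (the latter written in
diagrammatic order as `comp`).  Here `d = d_A : A×I → A`, `dInv = dⁱ_A`,
`assocR = b^→`, `assocL = b^←`, `braid = c`, `diag = w`, `bang = k`, `codiag = m`,
`exf = λ`, `inl = λ¹`, `inr = λ²`, `ev = ε`, `coev = η`. -/
inductive Mor : Obj → Obj → Type
  | id (A : Obj) : Mor A A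
  | comp {A B C : Obj} : Mor A B → Mor B C → Mor A C
  | d (A : Obj) : Mor (A.prod .unit) A
  | dInv (A : Obj) : Mor A (A.prod .unit)
  | assocR (A B C : Obj) : Mor (A.prod (B.prod C)) ((A.prod B).prod C)
  | assocL (A B C : Obj) : Mor ((A.prod B).prod C) (A.prod (B.prod C))
  | braid (A B : Obj) : Mor (A.prod B) (B.prod A)
  | diag (A : Obj) : Mor A (A.prod A)
  | bang (A : Obj) : Mor A .unit
  | codiag (A : Obj) : Mor (A.coprod A) A
  | exf (A : Obj) : Mor .zero A
  | inl (A B : Obj) : Mor A (A.coprod B)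
  | inr (A B : Obj) : Mor B (A.coprod B)
  | ev (A B : Obj) : Mor (A.prod (A.exp B)) B
  | coev (A B : Obj) : Mor B (A.exp (A.prod B))
  | pr {A B C D : Obj} : Mor A B → Mor C D → Mor (A.prod C) (B.prod D)
  | co {A B C D : Obj} : Mor A B → Mor C D → Mor (A.coprod C) (B.coprod D)
  | ex {A B C D : Obj} : Mor A B → Mor C D → Mor (B.exp C) (A.exp D)

namespace Mor

/-- the middle part of the canonical transformation `c^m` -/
def cmMid (B C D : Obj) : Mor (B.prod (C.prod D)) (C.prod (B.prod D)) :=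
  .comp (.assocR B C D) (.comp (.pr (.braid B C) (.id D)) (.assocL C B D))

/-- the canonical transformation
`c^m_{A,B,C,D} = b^→_{A,C,B×D} ∘ (1_A × (b^←_{C,B,D} ∘ (c_{B,C} × 1_D) ∘ b^→_{B,C,D})) ∘ b^←_{A,B,C×D}` -/
def cm (A B C D : Obj) : Mor ((A.prod B).prod (C.prod D)) ((A.prod C).prod (B.prod D)) :=
  .comp (.assocL A B (C.prod D)) (.comp (.pr (.id A) (cmMid B C D)) (.assocR A C (B.prod D)))

end Mor

/-- The bicartesian closed equations between morphism terms: the congruence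
generated by the equations of Section 1 of the paper. -/
inductive BEq : ∀ {A B : Obj}, Mor A B → Mor A B → Prop
  | refl {A B} (f : Mor A B) : BEq f f
  | symm {A B} {f g : Mor A B} : BEq f g → BEq g f
  | trans {A B} {f g h : Mor A B} : BEq f g → BEq g h → BEq f h
  | comp_congr {A B C} {f f' : Mor A B} {g g' : Mor B C} :
      BEq f f' → BEq g g' → BEq (.comp f g) (.comp f' g')
  | pr_congr {A B C D} {f f' : Mor A B} {g g' : Mor C D} :
      BEq f f' → BEq g g' → BEq (.pr f g) (.pr f' g')
  | co_congr {A B C D} {f f' : Mor A B} {g g' : Mor C D} :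
      BEq f f' → BEq g g' → BEq (.co f g) (.co f' g')
  | ex_congr {A B C D} {f f' : Mor A B} {g g' : Mor C D} :
      BEq f f' → BEq g g' → BEq (.ex f g) (.ex f' g')
  -- (cat 1), (cat 2)
  | id_left {A B} (f : Mor A B) : BEq (.comp (.id A) f) f
  | id_right {A B} (f : Mor A B) : BEq (.comp f (.id B)) f
  | assoc {A B C D} (f : Mor A B) (g : Mor B C) (h : Mor C D) :
      BEq (.comp (.comp f g) h) (.comp f (.comp g h))
  -- (× 1), (× 2)
  | prod_id (A B : Obj) : BEq (.pr (.id A) (.id B)) (.id (A.prod B))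
  | prod_comp {A B C A' B' C'} (f₁ : Mor A B) (f₂ : Mor B C) (g₁ : Mor A' B') (g₂ : Mor B' C') :
      BEq (.pr (.comp f₁ f₂) (.comp g₁ g₂)) (.comp (.pr f₁ g₁) (.pr f₂ g₂))
  -- (d)
  | d_nat {A B} (f : Mor A B) :
      BEq (.comp (.d A) f) (.comp (.pr f (.id .unit)) (.d B))
  -- (d dⁱ)
  | d_dInv (A : Obj) : BEq (.comp (.dInv A) (.d A)) (.id A)
  | dInv_d (A : Obj) : BEq (.comp (.d A) (.dInv A)) (.id (A.prod .unit))
  -- (d c)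
  | d_braid : BEq (.comp (.braid .unit .unit) (.d .unit)) (.d .unit)
  -- (b)
  | b_nat {A B C D E F'} (f : Mor A D) (g : Mor B E) (h : Mor C F') :
      BEq (.comp (.assocR A B C) (.pr (.pr f g) h))
          (.comp (.pr f (.pr g h)) (.assocR D E F'))
  -- (b b)
  | bR_bL (A B C : Obj) :
      BEq (.comp (.assocL A B C) (.assocR A B C)) (.id ((A.prod B).prod C))
  | bL_bR (A B C : Obj) :
      BEq (.comp (.assocR A B C) (.assocL A B C)) (.id (A.prod (B.prod C)))
  -- (b 5)
  | b5 (A B C D : Obj) :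
      BEq (.comp (.assocR A B (C.prod D)) (.assocR (A.prod B) C D))
          (.comp (.pr (.id A) (.assocR B C D))
            (.comp (.assocR A (B.prod C) D) (.pr (.assocR A B C) (.id D))))
  -- (c)
  | c_nat {A B C D} (f : Mor A C) (g : Mor B D) :
      BEq (.comp (.braid A B) (.pr g f)) (.comp (.pr f g) (.braid C D))
  -- (c c)
  | c_c (A B : Obj) : BEq (.comp (.braid A B) (.braid B A)) (.id (A.prod B))
  -- (b c d)
  | bcd (A B : Obj) :
      BEq (.comp (.assocR A .unit B) (.pr (.d A) (.id B)))
          (.pr (.id A) (.comp (.braid .unit B) (.d B)))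
  -- (b c 6)
  | bc6 (A B C : Obj) :
      BEq (.comp (.assocR A B C) (.comp (.braid (A.prod B) C) (.assocR C A B)))
          (.comp (.pr (.id A) (.braid B C))
            (.comp (.assocR A C B) (.pr (.braid A C) (.id B))))
  -- (w)
  | w_nat {A B} (f : Mor A B) :
      BEq (.comp (.diag A) (.pr f f)) (.comp f (.diag B))
  -- (d w)
  | d_w : BEq (.comp (.diag .unit) (.d .unit)) (.id .unit)
  -- (b w)
  | b_w (A : Obj) :
      BEq (.comp (.diag A) (.comp (.pr (.id A) (.diag A)) (.assocR A A A)))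
          (.comp (.diag A) (.pr (.diag A) (.id A)))
  -- (c w)
  | c_w (A : Obj) : BEq (.comp (.diag A) (.braid A A)) (.diag A)
  -- (b c w 8)
  | bcw8 (A B : Obj) :
      BEq (.comp (.diag (A.prod B)) (Mor.cm A B A B)) (.pr (.diag A) (.diag B))
  -- (k)
  | k_unique {A} (f : Mor A .unit) : BEq f (.bang A)
  -- (d k w)
  | dkw (A : Obj) :
      BEq (.comp (.diag A) (.comp (.pr (.id A) (.bang A)) (.d A))) (.id A)
  -- (+ 1), (+ 2)
  | coprod_id (A B : Obj) : BEq (.co (.id A) (.id B)) (.id (A.coprod B))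
  | coprod_comp {A B C A' B' C'} (f₁ : Mor A B) (f₂ : Mor B C) (g₁ : Mor A' B') (g₂ : Mor B' C') :
      BEq (.co (.comp f₁ f₂) (.comp g₁ g₂)) (.comp (.co f₁ g₁) (.co f₂ g₂))
  -- (λ¹), (λ²)
  | inl_nat {A₁ A₂ B₁ B₂} (f₁ : Mor A₁ B₁) (f₂ : Mor A₂ B₂) :
      BEq (.comp (.inl A₁ A₂) (.co f₁ f₂)) (.comp f₁ (.inl B₁ B₂))
  | inr_nat {A₁ A₂ B₁ B₂} (f₁ : Mor A₁ B₁) (f₂ : Mor A₂ B₂) :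
      BEq (.comp (.inr A₁ A₂) (.co f₁ f₂)) (.comp f₂ (.inr B₁ B₂))
  -- (λ)
  | exf_unique {A} (f : Mor .zero A) : BEq f (.exf A)
  -- (m)
  | m_nat {A B} (f : Mor A B) :
      BEq (.comp (.codiag A) f) (.comp (.co f f) (.codiag B))
  -- (λ m 1)
  | m_inl (A : Obj) : BEq (.comp (.inl A A) (.codiag A)) (.id A)
  | m_inr (A : Obj) : BEq (.comp (.inr A A) (.codiag A)) (.id A)
  -- (λ m 2)
  | m_inl_inr (A B : Obj) :
      BEq (.comp (.co (.inl A B) (.inr A B)) (.codiag (A.coprod B))) (.id (A.coprod B))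
  -- (⇒ 1), (⇒ 2)
  | exp_id (A B : Obj) : BEq (.ex (.id A) (.id B)) (.id (A.exp B))
  | exp_comp {A B' B C D' D} (g₁ : Mor B' B) (g₂ : Mor A B') (f₁ : Mor D' D) (f₂ : Mor C D') :
      BEq (.ex (.comp g₂ g₁) (.comp f₂ f₁)) (.comp (.ex g₁ f₂) (.ex g₂ f₁))
  -- (ε 1)
  | eps1 {A B C} (f : Mor A B) :
      BEq (.comp (.ev C A) f) (.comp (.pr (.id C) (.ex (.id C) f)) (.ev C B))
  -- (η 1)
  | eta1 {A B C} (f : Mor A B) :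
      BEq (.comp (.coev C A) (.ex (.id C) (.pr (.id C) f))) (.comp f (.coev C B))
  -- (ε 2)
  | eps2 {A B C} (f : Mor A B) :
      BEq (.comp (.pr f (.ex (.id B) (.id C))) (.ev B C))
          (.comp (.pr (.id A) (.ex f (.id C))) (.ev A C))
  -- (η 2)
  | eta2 {A B C} (f : Mor A B) :
      BEq (.comp (.coev B C) (.ex f (.pr (.id B) (.id C))))
          (.comp (.coev A C) (.ex (.id A) (.pr f (.id C))))
  -- (1 ε η)
  | triangle1 (A B : Obj) :
      BEq (.comp (.coev A (A.exp B)) (.ex (.id A) (.ev A B))) (.id (A.exp B))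
  -- (ε 1 η)
  | triangle2 (A B : Obj) :
      BEq (.comp (.pr (.id A) (.coev A B)) (.ev A (A.prod B))) (.id (A.prod B))

/-! ### The translations `t` and `t′` -/

/-- the translation of formulae into objects of `ℬ` -/
def tF : Fml → Obj
  | .pl i => .pl i
  | .top => .unit
  | .bot => .zero
  | .and A B => (tF A).prod (tF B)
  | .or A B => (tF A).coprod (tF B)
  | .imp A B => (tF A).exp (tF B)

/-- the functor (acting on morphism terms) extracted from a `∧`-context -/
def mapCtx : (F : Ctx) → {X Y : Fml} → Mor (tF X) (tF Y) →
    Mor (tF (F.fill X)) (tF (F.fill Y))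
  | .box, _, _, g => g
  | .conL G A, _, _, g => .pr (mapCtx G g) (.id (tF A))
  | .conR A G, _, _, g => .pr (.id (tF A)) (mapCtx G g)
  | .conB G H, _, _, g => .pr (mapCtx G g) (mapCtx H g)

/-- the canonical distributivity morphism
`ξ_{X,Y,Z} = ε ∘ (1_X × (m ∘ ((1_X ⇒ λ¹) ∘ η + (1_X ⇒ λ²) ∘ η))) : X×(Y+Z) → (X×Y)+(X×Z)` -/
def xiM (X Y Z : Obj) : Mor (X.prod (Y.coprod Z)) ((X.prod Y).coprod (X.prod Z)) :=
  .comp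
    (.pr (.id X)
      (.comp
        (.co (.comp (.coev X Y) (.ex (.id X) (.inl (X.prod Y) (X.prod Z))))
             (.comp (.coev X Z) (.ex (.id X) (.inr (X.prod Y) (X.prod Z)))))
        (.codiag (X.exp ((X.prod Y).coprod (X.prod Z))))))
    (.ev X ((X.prod Y).coprod (X.prod Z)))

/-- the translation `t` of `𝒥`-proofs into morphism terms of `ℬ` -/
def tP : ∀ {A B : Fml}, JPf A B → Mor (tF A) (tF B)
  | _, _, .ax A => .id (tF A)
  | _, _, .exf A => .exf (tF A)
  | _, _, .bA F _ (A := A) (B := B) (C := C) π =>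
      .comp (mapCtx F (X := A.and (B.and C)) (Y := (A.and B).and C)
        (.assocR (tF A) (tF B) (tF C))) (tP π)
  | _, _, .bB F _ (A := A) (B := B) (C := C) π =>
      .comp (mapCtx F (X := (A.and B).and C) (Y := A.and (B.and C))
        (.assocL (tF A) (tF B) (tF C))) (tP π)
  | _, _, .perm F _ (A := A) (B := B) π =>
      .comp (mapCtx F (X := B.and A) (Y := A.and B) (.braid (tF B) (tF A))) (tP π)
  | _, _, .contr F _ (A := A) π =>
      .comp (mapCtx F (X := A) (Y := A.and A) (.diag (tF A))) (tP π)
  | _, _, .thin F _ A π => .comp (mapCtx F (X := A) (Y := Fml.top) (.bang (tF A))) (tP π)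
  | _, _, .unitI F _ (A := A) π => .comp (mapCtx F (X := A.and Fml.top) (Y := A) (.d (tF A))) (tP π)
  | _, _, .unitE F _ (A := A) π => .comp (mapCtx F (X := A) (Y := A.and Fml.top) (.dInv (tF A))) (tP π)
  | _, _, .mix G π₁ π₂ => .comp (mapCtx G (tP π₁)) (tP π₂)
  | _, _, .andI π₁ π₂ => .pr (tP π₁) (tP π₂)
  | _, _, .orE (A := A) (B := B) (C := C) (D := D) π₁ π₂ =>
      .comp (.braid ((tF A).coprod (tF B)) (tF C))
        (.comp (xiM (tF C) (tF A) (tF B))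
          (.comp (.co (.braid (tF C) (tF A)) (.braid (tF C) (tF B)))
            (.comp (.co (tP π₁) (tP π₂)) (.codiag (tF D)))))
  | _, _, .orI1 C π => .comp (tP π) (.inl _ (tF C))
  | _, _, .orI2 B π => .comp (tP π) (.inr (tF B) _)
  | _, _, .star π => .comp (.coev _ _) (.ex (.id _) (tP π))
  | _, _, .tri (B := Bf) (C := Cf) π₁ π₂ =>
      .comp (.pr (.comp (.pr (tP π₁) (.id ((tF Bf).exp (tF Cf)))) (.ev (tF Bf) (tF Cf))) (.id _))
        (tP π₂)

/-- the translation of objects of `ℬ` back into formulae (inverse to `tF`) -/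
def uF : Obj → Fml
  | .pl i => .pl i
  | .unit => .top
  | .zero => .bot
  | .prod A B => (uF A).and (uF B)
  | .coprod A B => (uF A).or (uF B)
  | .exp A B => (uF A).imp (uF B)

theorem tF_uF (X : Obj) : tF (uF X) = X := by
  induction X <;> simp [tF, uF, *]

/-- the translation `t′` of morphism terms of `ℬ` into `𝒥`-proofs -/
def uP : ∀ {X Y : Obj}, Mor X Y → JPf (uF X) (uF Y)
  | _, _, .id A => .ax (uF A)
  | _, _, .comp f g => .mix .box (uP f) (uP g)
  | _, _, .d A => .unitI .box rfl (.ax (uF A))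
  | _, _, .dInv A => .unitE .box rfl (.ax ((uF A).and .top))
  | _, _, .assocR A B C => .bA .box rfl (.ax (((uF A).and (uF B)).and (uF C)))
  | _, _, .assocL A B C => .bB .box rfl (.ax ((uF A).and ((uF B).and (uF C))))
  | _, _, .braid A B => .perm .box rfl (.ax ((uF B).and (uF A)))
  | _, _, .diag A => .contr .box rfl (.ax ((uF A).and (uF A)))
  | _, _, .bang A => .thin .box rfl (uF A) (.ax .top)
  | _, _, .codiag A => .unitE .box rfl
      (.orE (.unitI .box rfl (.ax (uF A))) (.unitI .box rfl (.ax (uF A))))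
  | _, _, .exf A => .exf (uF A)
  | _, _, .inl A B => .orI1 (uF B) (.ax (uF A))
  | _, _, .inr A B => .orI2 (uF A) (.ax (uF B))
  | _, _, .ev A B => .unitE .box rfl (.tri (.ax (uF A)) (.unitI .box rfl (.ax (uF B))))
  | _, _, .coev A B => .star (.ax ((uF A).and (uF B)))
  | _, _, .pr f g => .andI (uP f) (uP g)
  | _, _, .co (A := A) (B := Bo) (C := C) (D := D) f g => .unitE .box rfl
      (.orE (.unitI .box rfl (.orI1 (uF D) (uP f)))
            (.unitI .box rfl (.orI2 (uF Bo) (uP g))))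
  | _, _, .ex f g => .star (.unitE .box rfl (.tri (uP f) (.unitI .box rfl (uP g))))

/-! ### The mix-elimination procedure -/

/-- transport of a proof along equalities of its endpoints -/
def recast {A A' B B' : Fml} (hA : A = A') (hB : B = B') (π : JPf A B) : JPf A' B' :=
  hA ▸ hB ▸ π

/-- the image of a proof under (the proof-theoretic action of) a `∧`-context -/
def ctxAp : (G : Ctx) → {A B : Fml} → JPf A B → JPf (G.fill A) (G.fill B)
  | .box, _, _, π => π
  | .conL G C, _, _, π => .andI (ctxAp G π) (.ax C)
  | .conR C G, _, _, π => .andI (.ax C) (ctxAp G π)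
  | .conB G H, _, _, π => .andI (ctxAp G π) (ctxAp H π)

/-- the canonical mixless proof of `G(⊥) ⊢ C`, obtained from `Π_C : ⊥ ⊢ C` by
`(τ)`, `(γ)` and `(θ)` -/
def botFill : (G : Ctx) → (C : Fml) → JPf (G.fill .bot) C
  | .box, C => .exf C
  | .conL G D, C => .thin (Ctx.conR (G.fill .bot) .box) rfl D
      (.unitI .box rfl (botFill G C))
  | .conR D G, C => .thin (Ctx.conL .box (G.fill .bot)) rfl D
      (.perm .box rfl (.unitI .box rfl (botFill G C)))
  | .conB G H, C => .thin (Ctx.conR (G.fill .bot) .box) rfl (H.fill .bot)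
      (.unitI .box rfl (botFill G C))

/-- One step of the mix-elimination procedure of the paper (the local proof
transformations of the cases of the cut-elimination theorem; the cases commuting a
mix with a structural rule are instances of the schemata below applied inside the
subproofs). -/
inductive ElimStep : ∀ {A B : Fml}, JPf A B → JPf A B → Prop
  /- case 1.1.1 -/
  | e111 {B C : Fml} (G : Ctx) (π₂ : JPf (G.fill B) C) :
      ElimStep (.mix G (.ax B) π₂) π₂
  /- case 1.1.2 -/
  | e112 {A B : Fml} (G : Ctx) (π₁ : JPf A B) :
      ElimStep (.mix G π₁ (.ax (G.fill B))) (ctxAp G π₁)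
  /- case 1.1.3 -/
  | e113 {B C : Fml} (G : Ctx) (π₂ : JPf (G.fill B) C) :
      ElimStep (.mix G (.exf B) π₂) (botFill G C)
  /- case 1.1.4 -/
  | e114 {C : Fml} (π₁ : JPf .bot .bot) :
      ElimStep (.mix .box π₁ (.exf C)) (.exf C)
  /- case 1.2: `π₁` ends with `(∧)` -/
  | e12 {A₁ A₂ B₁ B₂ C : Fml} (G : Ctx) (π₁' : JPf A₁ B₁) (π₁'' : JPf A₂ B₂)
      (π₂ : JPf (G.fill (B₁.and B₂)) C) :
      ElimStep (.mix G (.andI π₁' π₁'') π₂)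
        (recast (by simp [Ctx.subst_fill, Ctx.fill]) rfl
          (.mix (G.subst (.conL .box A₂)) π₁'
            (recast (by simp [Ctx.subst_fill, Ctx.fill]) rfl
              (.mix (G.subst (.conR B₁ .box)) π₁''
                (recast (by simp [Ctx.subst_fill, Ctx.fill]) rfl π₂)))))
  /- cases 1.3.1, 1.4.1, 2.2 with `π₂` ending with `(θ)`: the mixed formula is
  introduced by thinning -/
  | e131 {A B C : Fml} (F G₁ : Ctx) (hF : F.boxes = 1) (π₁ : JPf A B)
      (π₂' : JPf (F.fill .top) C) :
      ElimStep
        (.mix (F.subst G₁) π₁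
          (recast (by simp [Ctx.subst_fill]) rfl (.thin F hF (G₁.fill B) π₂')))
        (recast (by simp [Ctx.subst_fill]) rfl (.thin F hF (G₁.fill A) π₂'))
  /- case 1.3.2: `π₁` ends with `(∗)`, `π₂` ends with `(▷)` -/
  | e132 {A B₁ B₂ D E C : Fml} (π₁' : JPf (B₁.and A) B₂) (π₂' : JPf D B₁)
      (π₂'' : JPf (B₂.and E) C) :
      ElimStep (.mix (Ctx.conL (Ctx.conR D .box) E) (.star π₁') (.tri π₂' π₂''))
        (.mix (Ctx.conL (Ctx.conL .box A) E) π₂'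
          (.mix (Ctx.conL .box E) π₁' π₂''))
  /- case 1.4.2: `π₁` ends with a right `∨`-introduction, `π₂` ends with `(◇)` -/
  | e142l {A B₁ B₂ D C : Fml} (π₁' : JPf A B₁) (π₂' : JPf (B₁.and D) C)
      (π₂'' : JPf (B₂.and D) C) :
      ElimStep (.mix (Ctx.conL .box D) (.orI1 B₂ π₁') (.orE π₂' π₂''))
        (.mix (Ctx.conL .box D) π₁' π₂')
  | e142r {A B₁ B₂ D C : Fml} (π₁' : JPf A B₂) (π₂' : JPf (B₁.and D) C)
      (π₂'' : JPf (B₂.and D) C) :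
      ElimStep (.mix (Ctx.conL .box D) (.orI2 B₁ π₁') (.orE π₂' π₂''))
        (.mix (Ctx.conL .box D) π₁' π₂'')
  /- case 2.1.2: `π₂` ends with `(∧)` -/
  | e212 {A B C₁ C₂ : Fml} (G₁ G₂ : Ctx) (π₁ : JPf A B)
      (π₂' : JPf (G₁.fill B) C₁) (π₂'' : JPf (G₂.fill B) C₂) :
      ElimStep (.mix (Ctx.conB G₁ G₂) π₁ (.andI π₂' π₂''))
        (.andI (.mix G₁ π₁ π₂') (.mix G₂ π₁ π₂''))
  /- case 2.1.3: `π₂` ends with `(∗)` -/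
  | e213 {A B C₁ C₂ : Fml} (G : Ctx) (π₁ : JPf A B)
      (π₂' : JPf (C₁.and (G.fill B)) C₂) :
      ElimStep (.mix G π₁ (.star π₂')) (.star (.mix (Ctx.conR C₁ G) π₁ π₂'))
  /- case 2.1.4.1: `π₂` ends with `(▷)`, the mixed formula being the implication -/
  | e2141 {A B₁ B₂ C : Fml} (G₁ G₂ : Ctx) (π₁ : JPf A (B₁.imp B₂))
      (π₂' : JPf (G₁.fill (B₁.imp B₂)) B₁)
      (π₂'' : JPf (B₂.and (G₂.fill (B₁.imp B₂))) C) :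
      ElimStep (.mix (Ctx.conB (Ctx.conB G₁ .box) G₂) π₁ (.tri π₂' π₂''))
        (.mix (Ctx.conL (Ctx.conR (G₁.fill A) .box) (G₂.fill A)) π₁
          (.tri (.mix G₁ π₁ π₂') (.mix (Ctx.conR B₂ G₂) π₁ π₂'')))
  /- case 2.1.4.2 -/
  | e2142 {A B₁ B₂ B₃ C : Fml} (G₁ : Ctx) (π₁ : JPf A (B₁.and (B₂.imp B₃)))
      (π₂' : JPf B₁ B₂) (π₂'' : JPf (B₃.and (G₁.fill (B₁.and (B₂.imp B₃)))) C) :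
      ElimStep (.mix (Ctx.conB .box G₁) π₁ (.tri π₂' π₂''))
        (.mix (Ctx.conL .box (G₁.fill A)) π₁
          (.tri π₂' (.mix (Ctx.conR B₃ G₁) π₁ π₂'')))
  /- case 2.1.4.3 -/
  | e2143 {A B D E C : Fml} (G₁ G₂ : Ctx) (π₁ : JPf A B)
      (π₂' : JPf (G₁.fill B) D) (π₂'' : JPf (E.and (G₂.fill B)) C) :
      ElimStep (.mix (Ctx.conB (Ctx.conL G₁ (D.imp E)) G₂) π₁ (.tri π₂' π₂''))
        (.tri (.mix G₁ π₁ π₂') (.mix (Ctx.conR E G₂) π₁ π₂''))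
  /- case 2.1.5.1: `π₂` ends with `(◇)`, the mixed formula being the disjunction -/
  | e2151 {A B₁ B₂ C : Fml} (G₁ : Ctx) (π₁ : JPf A (B₁.or B₂))
      (π₂' : JPf (B₁.and (G₁.fill (B₁.or B₂))) C)
      (π₂'' : JPf (B₂.and (G₁.fill (B₁.or B₂))) C) :
      ElimStep (.mix (Ctx.conB .box G₁) π₁ (.orE π₂' π₂''))
        (.mix (Ctx.conL .box (G₁.fill A)) π₁
          (.orE (.mix (Ctx.conR B₁ G₁) π₁ π₂') (.mix (Ctx.conR B₂ G₁) π₁ π₂'')))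
  /- case 2.1.5.2 -/
  | e2152 {A B D₁ D₂ C : Fml} (G₁ : Ctx) (π₁ : JPf A B)
      (π₂' : JPf (D₁.and (G₁.fill B)) C) (π₂'' : JPf (D₂.and (G₁.fill B)) C) :
      ElimStep (.mix (Ctx.conR (D₁.or D₂) G₁) π₁ (.orE π₂' π₂''))
        (.orE (.mix (Ctx.conR D₁ G₁) π₁ π₂') (.mix (Ctx.conR D₂ G₁) π₁ π₂''))
  /- case 2.1.6: `π₂` ends with a right `∨`-introduction -/
  | e216l {A B C₁ C₂ : Fml} (G : Ctx) (π₁ : JPf A B) (π₂' : JPf (G.fill B) C₁) :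
      ElimStep (.mix G π₁ (.orI1 C₂ π₂')) (.orI1 C₂ (.mix G π₁ π₂'))
  | e216r {A B C₁ C₂ : Fml} (G : Ctx) (π₁ : JPf A B) (π₂' : JPf (G.fill B) C₁) :
      ElimStep (.mix G π₁ (.orI2 C₂ π₂')) (.orI2 C₂ (.mix G π₁ π₂'))


/-! Every reduction step becomes an equation valid in any bicartesian closed category once
morphism terms are read modulo `BEq`: functoriality of the `∧`-contexts, the β-laws of the
exponential (evaluation after currying) and of the coproduct (an injection followed by the copairing
built from the distributivity morphism `ξ`), naturality of currying and of `ξ`, uniqueness of maps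
into `I`, and initiality of `G(⊥)`. The last holds because `X × _` has the right adjoint `X ⇒ _`
and so preserves the initial object `O`. -/

open CategoryTheory Limits

instance morSetoid (X Y : Obj) : Setoid (Mor X Y) :=
  ⟨BEq, ⟨BEq.refl, BEq.symm, BEq.trans⟩⟩

instance : Category Obj where
  Hom X Y := Quotient (morSetoid X Y)
  id X := ⟦Mor.id X⟧
  comp := Quotient.map₂ Mor.comp fun _ _ h _ _ h' => h.comp_congr h'
  id_comp f := Quotient.inductionOn f fun f => Quotient.sound (.id_left f)
  comp_id f := Quotient.inductionOn f fun f => Quotient.sound (.id_right f)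
  assoc f g h := Quotient.inductionOn₃ f g h fun f g h => Quotient.sound (.assoc f g h)

def prodMap {A B C D : Obj} : (A ⟶ B) → (C ⟶ D) → (A.prod C ⟶ B.prod D) :=
  Quotient.map₂ Mor.pr fun _ _ h _ _ h' => h.pr_congr h'

def coprodMap {A B C D : Obj} : (A ⟶ B) → (C ⟶ D) → (A.coprod C ⟶ B.coprod D) :=
  Quotient.map₂ Mor.co fun _ _ h _ _ h' => h.co_congr h'

def expMap {A B C D : Obj} : (A ⟶ B) → (C ⟶ D) → (B.exp C ⟶ A.exp D) :=
  Quotient.map₂ Mor.ex fun _ _ h _ _ h' => h.ex_congr h'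

namespace Mor

variable {A B C D X Y Z : Obj}

def cls (f : Mor X Y) : X ⟶ Y := ⟦f⟧

theorem cls_eq_cls {f g : Mor X Y} : f.cls = g.cls ↔ BEq f g := Quotient.eq

theorem cls_surjective : Function.Surjective (cls : Mor X Y → (X ⟶ Y)) :=
  Quotient.exists_rep

@[simp] theorem cls_id : (Mor.id X).cls = 𝟙 X := rfl

@[simp] theorem cls_comp (f : Mor X Y) (g : Mor Y Z) : (f.comp g).cls = f.cls ≫ g.cls := rfl

@[simp] theorem cls_pr (f : Mor A B) (g : Mor C D) : (f.pr g).cls = prodMap f.cls g.cls := rfl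

@[simp] theorem cls_ex (f : Mor A B) (g : Mor C D) : (f.ex g).cls = expMap f.cls g.cls := rfl

end Mor

section Laws

variable {A B C D E F W : Obj}

@[simp] theorem prodMap_id : prodMap (𝟙 A) (𝟙 B) = 𝟙 (A.prod B) :=
  Quotient.sound (.prod_id A B)

@[simp] theorem prodMap_comp_prodMap (f : A ⟶ B) (g : C ⟶ D) (h : B ⟶ E) (k : D ⟶ F) :
    prodMap f g ≫ prodMap h k = prodMap (f ≫ h) (g ≫ k) := by
  rcases f with ⟨f⟩; rcases g with ⟨g⟩; rcases h with ⟨h⟩; rcases k with ⟨k⟩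
  exact Quotient.sound (BEq.prod_comp f h g k).symm

@[simp] theorem prodMap_comp_prodMap_assoc (f : A ⟶ B) (g : C ⟶ D) (h : B ⟶ E) (k : D ⟶ F)
    (l : E.prod F ⟶ W) : prodMap f g ≫ prodMap h k ≫ l = prodMap (f ≫ h) (g ≫ k) ≫ l := by
  rw [← Category.assoc, prodMap_comp_prodMap]

theorem prodMap_comp_id (f : A ⟶ B) (g : B ⟶ C) :
    prodMap (f ≫ g) (𝟙 D) = prodMap f (𝟙 D) ≫ prodMap g (𝟙 D) := by
  simp

theorem prodMap_id_comp (f : A ⟶ B) (g : B ⟶ C) :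
    prodMap (𝟙 D) (f ≫ g) = prodMap (𝟙 D) f ≫ prodMap (𝟙 D) g := by
  simp

theorem prodMap_eqToHom {A' B' : Obj} (hA : A = A') (hB : B = B') :
    prodMap (eqToHom hA) (eqToHom hB) = eqToHom (congrArg₂ Obj.prod hA hB) := by
  subst hA hB
  simp

@[simp] theorem coprodMap_comp_coprodMap (f : A ⟶ B) (g : C ⟶ D) (h : B ⟶ E) (k : D ⟶ F) :
    coprodMap f g ≫ coprodMap h k = coprodMap (f ≫ h) (g ≫ k) := by
  rcases f with ⟨f⟩; rcases g with ⟨g⟩; rcases h with ⟨h⟩; rcases k with ⟨k⟩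
  exact Quotient.sound (BEq.coprod_comp f h g k).symm

@[simp] theorem coprodMap_comp_coprodMap_assoc (f : A ⟶ B) (g : C ⟶ D) (h : B ⟶ E)
    (k : D ⟶ F) (l : E.coprod F ⟶ W) :
    coprodMap f g ≫ coprodMap h k ≫ l = coprodMap (f ≫ h) (g ≫ k) ≫ l := by
  rw [← Category.assoc, coprodMap_comp_coprodMap]

@[simp] theorem expMap_id : expMap (𝟙 A) (𝟙 B) = 𝟙 (A.exp B) :=
  Quotient.sound (.exp_id A B)

@[simp] theorem expMap_comp_expMap (g : B ⟶ C) (f : D ⟶ E) (g' : A ⟶ B) (f' : E ⟶ F) :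
    expMap g f ≫ expMap g' f' = expMap (g' ≫ g) (f ≫ f') := by
  rcases g with ⟨g⟩; rcases f with ⟨f⟩; rcases g' with ⟨g'⟩; rcases f' with ⟨f'⟩
  exact Quotient.sound (BEq.exp_comp g g' f' f).symm

theorem braid_comp_prodMap (f : A ⟶ C) (g : B ⟶ D) :
    (Mor.braid A B).cls ≫ prodMap g f = prodMap f g ≫ (Mor.braid C D).cls := by
  rcases f with ⟨f⟩; rcases g with ⟨g⟩
  exact Quotient.sound (BEq.c_nat f g)

@[simp] theorem braid_comp_braid : (Mor.braid A B).cls ≫ (Mor.braid B A).cls = 𝟙 (A.prod B) :=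
  Quotient.sound (.c_c A B)

theorem eq_bang (f : A ⟶ .unit) : f = (Mor.bang A).cls := by
  rcases f with ⟨f⟩
  exact Quotient.sound (BEq.k_unique f)

theorem eq_exf (f : .zero ⟶ A) : f = (Mor.exf A).cls := by
  rcases f with ⟨f⟩
  exact Quotient.sound (BEq.exf_unique f)

@[simp] theorem inl_comp_coprodMap (f : A ⟶ B) (g : C ⟶ D) :
    (Mor.inl A C).cls ≫ coprodMap f g = f ≫ (Mor.inl B D).cls := by
  rcases f with ⟨f⟩; rcases g with ⟨g⟩
  exact Quotient.sound (BEq.inl_nat f g)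

@[simp] theorem inl_comp_coprodMap_assoc (f : A ⟶ B) (g : C ⟶ D) (l : B.coprod D ⟶ W) :
    (Mor.inl A C).cls ≫ coprodMap f g ≫ l = f ≫ (Mor.inl B D).cls ≫ l := by
  rw [← Category.assoc, inl_comp_coprodMap, Category.assoc]

@[simp] theorem inr_comp_coprodMap (f : A ⟶ B) (g : C ⟶ D) :
    (Mor.inr A C).cls ≫ coprodMap f g = g ≫ (Mor.inr B D).cls := by
  rcases f with ⟨f⟩; rcases g with ⟨g⟩
  exact Quotient.sound (BEq.inr_nat f g)

@[simp] theorem inr_comp_coprodMap_assoc (f : A ⟶ B) (g : C ⟶ D) (l : B.coprod D ⟶ W) :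
    (Mor.inr A C).cls ≫ coprodMap f g ≫ l = g ≫ (Mor.inr B D).cls ≫ l := by
  rw [← Category.assoc, inr_comp_coprodMap, Category.assoc]

theorem codiag_comp (f : A ⟶ B) :
    (Mor.codiag A).cls ≫ f = coprodMap f f ≫ (Mor.codiag B).cls := by
  rcases f with ⟨f⟩
  exact Quotient.sound (BEq.m_nat f)

@[simp] theorem inl_comp_codiag : (Mor.inl A A).cls ≫ (Mor.codiag A).cls = 𝟙 A :=
  Quotient.sound (.m_inl A)

@[simp] theorem inr_comp_codiag : (Mor.inr A A).cls ≫ (Mor.codiag A).cls = 𝟙 A :=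
  Quotient.sound (.m_inr A)

theorem ev_comp (f : A ⟶ B) :
    (Mor.ev C A).cls ≫ f = prodMap (𝟙 C) (expMap (𝟙 C) f) ≫ (Mor.ev C B).cls := by
  rcases f with ⟨f⟩
  exact Quotient.sound (BEq.eps1 f)

theorem prodMap_comp_ev (f : A ⟶ B) :
    prodMap f (𝟙 (B.exp C)) ≫ (Mor.ev B C).cls
      = prodMap (𝟙 A) (expMap f (𝟙 C)) ≫ (Mor.ev A C).cls := by
  obtain ⟨f, rfl⟩ := Mor.cls_surjective f
  simpa using Mor.cls_eq_cls.2 (BEq.eps2 (C := C) f)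

theorem comp_coev (f : A ⟶ B) :
    f ≫ (Mor.coev C B).cls = (Mor.coev C A).cls ≫ expMap (𝟙 C) (prodMap (𝟙 C) f) := by
  rcases f with ⟨f⟩
  exact (Quotient.sound (BEq.eta1 f)).symm

theorem coev_comp_expMap (f : A ⟶ B) :
    (Mor.coev B C).cls ≫ expMap f (𝟙 (B.prod C))
      = (Mor.coev A C).cls ≫ expMap (𝟙 A) (prodMap f (𝟙 C)) := by
  obtain ⟨f, rfl⟩ := Mor.cls_surjective f
  simpa using Mor.cls_eq_cls.2 (BEq.eta2 (C := C) f)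

@[simp] theorem prodMap_coev_comp_ev :
    prodMap (𝟙 A) (Mor.coev A B).cls ≫ (Mor.ev A (A.prod B)).cls = 𝟙 (A.prod B) :=
  Quotient.sound (.triangle2 A B)

end Laws

section Curry

variable {A B C X X' Y Z : Obj}

def curry (f : X.prod Z ⟶ B) : Z ⟶ X.exp B :=
  (Mor.coev X Z).cls ≫ expMap (𝟙 X) f

@[simp] theorem prodMap_curry_comp_ev (g : A ⟶ X) (f : X.prod Z ⟶ B) :
    prodMap g (curry f) ≫ (Mor.ev X B).cls = prodMap g (𝟙 Z) ≫ f := by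
  have split : prodMap g (curry f) = prodMap g (𝟙 Z) ≫ prodMap (𝟙 X) (Mor.coev X Z).cls ≫
      prodMap (𝟙 X) (expMap (𝟙 X) f) := by
    simp [curry]
  rw [split]
  simp only [Category.assoc]
  rw [← ev_comp, ← Category.assoc (prodMap (𝟙 X) (Mor.coev X Z).cls), prodMap_coev_comp_ev,
    Category.id_comp]

theorem curry_natural_left (g : Y ⟶ Z) (f : X.prod Z ⟶ B) :
    g ≫ curry f = curry (prodMap (𝟙 X) g ≫ f) := by
  rw [curry, ← Category.assoc, comp_coev, Category.assoc, expMap_comp_expMap, Category.id_comp,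
    curry]

theorem curry_natural_right (f : X.prod Z ⟶ B) (h : B ⟶ C) :
    curry f ≫ expMap (𝟙 X) h = curry (f ≫ h) := by
  simp [curry]

theorem curry_comp_pre (g : X ⟶ X') (f : X'.prod Z ⟶ B) :
    curry f ≫ expMap g (𝟙 B) = curry (prodMap g (𝟙 Z) ≫ f) := by
  calc curry f ≫ expMap g (𝟙 B)
      = ((Mor.coev X' Z).cls ≫ expMap g (𝟙 (X'.prod Z))) ≫ expMap (𝟙 X) f := by simp [curry]
    _ = curry (prodMap g (𝟙 Z) ≫ f) := by rw [coev_comp_expMap]; simp [curry]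

theorem prodMap_id_comp_ev_comp (h : Z ⟶ X.exp B) (k : B ⟶ C) :
    prodMap (𝟙 X) h ≫ (Mor.ev X B).cls ≫ k
      = prodMap (𝟙 X) (h ≫ expMap (𝟙 X) k) ≫ (Mor.ev X C).cls := by
  rw [ev_comp, ← Category.assoc, prodMap_comp_prodMap, Category.id_comp]

end Curry

section Distributivity

variable {X Y Z Z' : Obj}

theorem cls_xiM : (xiM Z X Y).cls
    = prodMap (𝟙 Z) (coprodMap (curry (Mor.inl (Z.prod X) (Z.prod Y)).cls)
        (curry (Mor.inr (Z.prod X) (Z.prod Y)).cls) ≫ (Mor.codiag _).cls) ≫ (Mor.ev _ _).cls :=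
  rfl

theorem prodMap_inl_comp_xiM :
    prodMap (𝟙 Z) (Mor.inl X Y).cls ≫ (xiM Z X Y).cls = (Mor.inl (Z.prod X) (Z.prod Y)).cls := by
  simp [cls_xiM]

theorem prodMap_inr_comp_xiM :
    prodMap (𝟙 Z) (Mor.inr X Y).cls ≫ (xiM Z X Y).cls = (Mor.inr (Z.prod X) (Z.prod Y)).cls := by
  simp [cls_xiM]

theorem prodMap_comp_xiM (g : Z ⟶ Z') :
    prodMap g (𝟙 (X.coprod Y)) ≫ (xiM Z' X Y).cls
      = (xiM Z X Y).cls ≫ coprodMap (prodMap g (𝟙 X)) (prodMap g (𝟙 Y)) := by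
  have swap : prodMap g (𝟙 (X.coprod Y)) ≫ prodMap (𝟙 Z')
      (coprodMap (curry (Mor.inl _ _).cls) (curry (Mor.inr _ _).cls) ≫ (Mor.codiag _).cls)
      = prodMap (𝟙 Z) (coprodMap (curry (Mor.inl (Z'.prod X) (Z'.prod Y)).cls)
          (curry (Mor.inr _ _).cls) ≫ (Mor.codiag _).cls) ≫ prodMap g (𝟙 _) := by
    simp
  rw [cls_xiM, cls_xiM, ← Category.assoc, swap]
  simp only [Category.assoc]
  rw [prodMap_comp_ev, prodMap_comp_prodMap_assoc, Category.id_comp, prodMap_id_comp_ev_comp]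
  simp [codiag_comp, curry_natural_right, curry_comp_pre]

end Distributivity

section Connectives

variable {U X Y Z Z' A B C W : Obj}

-- `tP` sends `(◇)` to `orElim` and `(▷)` to `triMap`, definitionally.
def orElim (p : X.prod Z ⟶ W) (q : Y.prod Z ⟶ W) : (X.coprod Y).prod Z ⟶ W :=
  (Mor.braid (X.coprod Y) Z).cls ≫ (xiM Z X Y).cls ≫
    coprodMap (Mor.braid Z X).cls (Mor.braid Z Y).cls ≫ coprodMap p q ≫ (Mor.codiag W).cls

def triMap (p : A ⟶ B) (q : C.prod Z ⟶ W) : (A.prod (B.exp C)).prod Z ⟶ W :=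
  prodMap (prodMap p (𝟙 _) ≫ (Mor.ev B C).cls) (𝟙 Z) ≫ q

theorem prodMap_inl_comp_orElim (p : X.prod Z ⟶ W) (q : Y.prod Z ⟶ W) :
    prodMap (Mor.inl X Y).cls (𝟙 Z) ≫ orElim p q = p := by
  rw [orElim, ← Category.assoc, ← braid_comp_prodMap, Category.assoc,
    reassoc_of% prodMap_inl_comp_xiM]
  simp [reassoc_of% braid_comp_braid]

theorem prodMap_inr_comp_orElim (p : X.prod Z ⟶ W) (q : Y.prod Z ⟶ W) :
    prodMap (Mor.inr X Y).cls (𝟙 Z) ≫ orElim p q = q := by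
  rw [orElim, ← Category.assoc, ← braid_comp_prodMap, Category.assoc,
    reassoc_of% prodMap_inr_comp_xiM]
  simp [reassoc_of% braid_comp_braid]

theorem prodMap_comp_inl_comp_orElim (a : U ⟶ X) (p : X.prod Z ⟶ W) (q : Y.prod Z ⟶ W) :
    prodMap (a ≫ (Mor.inl X Y).cls) (𝟙 Z) ≫ orElim p q = prodMap a (𝟙 Z) ≫ p := by
  simpa using congrArg (prodMap a (𝟙 Z) ≫ ·) (prodMap_inl_comp_orElim p q)

theorem prodMap_comp_inr_comp_orElim (a : U ⟶ Y) (p : X.prod Z ⟶ W) (q : Y.prod Z ⟶ W) :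
    prodMap (a ≫ (Mor.inr X Y).cls) (𝟙 Z) ≫ orElim p q = prodMap a (𝟙 Z) ≫ q := by
  simpa using congrArg (prodMap a (𝟙 Z) ≫ ·) (prodMap_inr_comp_orElim p q)

theorem prodMap_id_comp_orElim (g : Z ⟶ Z') (p : X.prod Z' ⟶ W) (q : Y.prod Z' ⟶ W) :
    prodMap (𝟙 (X.coprod Y)) g ≫ orElim p q
      = orElim (prodMap (𝟙 X) g ≫ p) (prodMap (𝟙 Y) g ≫ q) := by
  rw [orElim, ← Category.assoc, ← braid_comp_prodMap, Category.assoc,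
    reassoc_of% prodMap_comp_xiM]
  simp only [orElim, coprodMap_comp_coprodMap_assoc]
  simp only [← Category.assoc, braid_comp_prodMap]

theorem prodMap_comp_orElim (f : U ⟶ X.coprod Y) (g : Z ⟶ Z') (p : X.prod Z' ⟶ W)
    (q : Y.prod Z' ⟶ W) :
    prodMap f g ≫ orElim p q
      = prodMap f (𝟙 Z) ≫ orElim (prodMap (𝟙 X) g ≫ p) (prodMap (𝟙 Y) g ≫ q) := by
  rw [← prodMap_id_comp_orElim, prodMap_comp_prodMap_assoc, Category.id_comp, Category.comp_id]

theorem prodMap_curry_comp_triMap (f : X.prod Y ⟶ C) (p : A ⟶ X) (q : C.prod Z ⟶ W) :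
    prodMap (prodMap (𝟙 A) (curry f)) (𝟙 Z) ≫ triMap p q
      = prodMap (prodMap p (𝟙 Y)) (𝟙 Z) ≫ prodMap f (𝟙 Z) ≫ q := by
  simp [triMap]

theorem prodMap_comp_triMap (f : X ⟶ A.prod (B.exp C)) (g : Z ⟶ Z') (p : A ⟶ B)
    (q : C.prod Z' ⟶ W) :
    prodMap f g ≫ triMap p q = prodMap f (𝟙 Z) ≫ triMap p (prodMap (𝟙 C) g ≫ q) := by
  simp [triMap]

theorem prodMap_prodMap_comp_triMap (a : X ⟶ A) (f : Y ⟶ B.exp C) (g : Z ⟶ Z') (p : A ⟶ B)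
    (q : C.prod Z' ⟶ W) :
    prodMap (prodMap a f) g ≫ triMap p q
      = prodMap (prodMap (𝟙 X) f) (𝟙 Z) ≫ triMap (a ≫ p) (prodMap (𝟙 C) g ≫ q) := by
  simp [triMap]

theorem prodMap_prodMap_id_comp_triMap (a : X ⟶ A) (g : Z ⟶ Z') (p : A ⟶ B)
    (q : C.prod Z' ⟶ W) :
    prodMap (prodMap a (𝟙 (B.exp C))) g ≫ triMap p q
      = triMap (a ≫ p) (prodMap (𝟙 C) g ≫ q) := by
  simp [triMap]

end Connectives

section Initial

def isInitialZero : IsInitial Obj.zero :=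
  IsInitial.ofUniqueHom (fun Y => (Mor.exf Y).cls) fun _ f => eq_exf f

def isInitialProdOfRight {Z : Obj} (hZ : IsInitial Z) (X : Obj) : IsInitial (X.prod Z) :=
  IsInitial.ofUniqueHom (fun Y => prodMap (𝟙 X) (hZ.to (X.exp Y)) ≫ (Mor.ev X Y).cls)
    fun _ f => by
      rw [hZ.hom_ext (hZ.to _) (curry f), prodMap_curry_comp_ev, prodMap_id, Category.id_comp]

def braidIso (X Y : Obj) : X.prod Y ≅ Y.prod X where
  hom := (Mor.braid X Y).cls
  inv := (Mor.braid Y X).cls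

def isInitialProdOfLeft {Z : Obj} (hZ : IsInitial Z) (X : Obj) : IsInitial (Z.prod X) :=
  (isInitialProdOfRight hZ X).ofIso (braidIso X Z)

def isInitialFillBot : (G : Ctx) → IsInitial (tF (G.fill .bot))
  | .box => isInitialZero
  | .conL G _ => isInitialProdOfLeft (isInitialFillBot G) _
  | .conR _ G => isInitialProdOfRight (isInitialFillBot G) _
  | .conB G _ => isInitialProdOfLeft (isInitialFillBot G) _

end Initial

section Contexts

theorem cls_mapCtx_id (G : Ctx) (X : Fml) : (mapCtx G (Mor.id (tF X))).cls = 𝟙 _ := by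
  induction G <;> dsimp only [mapCtx, Ctx.fill, tF] at * <;> simp_all

theorem cls_mapCtx_comp (G : Ctx) {X Y Z : Fml} (u : Mor (tF X) (tF Y))
    (v : Mor (tF Y) (tF Z)) :
    (mapCtx G (u.comp v)).cls = (mapCtx G u).cls ≫ (mapCtx G v).cls := by
  induction G <;> dsimp only [mapCtx, Ctx.fill, tF] at * <;> simp_all

theorem cls_mapCtx_congr (G : Ctx) {X Y : Fml} {u v : Mor (tF X) (tF Y)} (h : u.cls = v.cls) :
    (mapCtx G u).cls = (mapCtx G v).cls := by
  induction G <;> dsimp only [mapCtx, Ctx.fill, tF] at * <;> simp_all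

theorem cls_mapCtx_pr (G : Ctx) {A₁ A₂ B₁ B₂ : Fml} (f : Mor (tF A₁) (tF B₁))
    (g : Mor (tF A₂) (tF B₂)) :
    (mapCtx G (X := A₁.and A₂) (Y := B₁.and B₂) (f.pr g)).cls
      = (mapCtx G (X := A₁.and A₂) (Y := B₁.and A₂) (f.pr (Mor.id _))).cls ≫
          (mapCtx G (X := B₁.and A₂) (Y := B₁.and B₂) ((Mor.id _).pr g)).cls := by
  refine (cls_mapCtx_congr G ?_).trans (cls_mapCtx_comp G _ _)
  change prodMap f.cls g.cls = prodMap f.cls (𝟙 _) ≫ prodMap (𝟙 _) g.cls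
  simp

theorem cls_mapCtx_comp_bang (G : Ctx) {X Y : Fml} (g : Mor (tF X) (tF Y)) :
    (mapCtx G g).cls ≫ (mapCtx G (X := Y) (Y := .top) (Mor.bang (tF Y))).cls
      = (mapCtx G (X := X) (Y := .top) (Mor.bang (tF X))).cls :=
  (cls_mapCtx_comp G _ _).symm.trans (cls_mapCtx_congr G (eq_bang _))

theorem cls_mapCtx_subst (G K : Ctx) {X Y : Fml} (f : Mor (tF X) (tF Y)) :
    (mapCtx (G.subst K) f).cls
      = eqToHom (congrArg tF (G.subst_fill K X)) ≫ (mapCtx G (mapCtx K f)).cls ≫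
          eqToHom (congrArg tF (G.subst_fill K Y)).symm := by
  induction G with
  | box => erw [eqToHom_refl, eqToHom_refl, Category.id_comp, Category.comp_id]; rfl
  | conL G A ih =>
    change prodMap (mapCtx (G.subst K) f).cls (𝟙 _)
      = eqToHom _ ≫ prodMap (mapCtx G (mapCtx K f)).cls (𝟙 _) ≫ eqToHom _
    rw [ih, prodMap_comp_id, prodMap_comp_id, ← eqToHom_refl _ rfl, prodMap_eqToHom,
      prodMap_eqToHom]
  | conR A G ih =>
    change prodMap (𝟙 _) (mapCtx (G.subst K) f).cls
      = eqToHom _ ≫ prodMap (𝟙 _) (mapCtx G (mapCtx K f)).cls ≫ eqToHom _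
    rw [ih, prodMap_id_comp, prodMap_id_comp, ← eqToHom_refl _ rfl, prodMap_eqToHom,
      prodMap_eqToHom]
  | conB G H ihG ihH =>
    change prodMap (mapCtx (G.subst K) f).cls (mapCtx (H.subst K) f).cls
      = eqToHom _ ≫ prodMap (mapCtx G (mapCtx K f)).cls (mapCtx H (mapCtx K f)).cls ≫
          eqToHom _
    rw [ihG, ihH, ← prodMap_comp_prodMap, ← prodMap_comp_prodMap, prodMap_eqToHom,
      prodMap_eqToHom]

/- The two instances of `cls_mapCtx_subst` met in case 1.2, with `Ctx.fill` unfolded in the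
endpoints of the transports, so that these cancel syntactically against those of `recast`. -/

theorem cls_mapCtx_subst_conL (G : Ctx) (A : Fml) {X Y : Fml} (f : Mor (tF X) (tF Y)) :
    (mapCtx (G.subst (.conL .box A)) f).cls
      = eqToHom (by rw [Ctx.subst_fill]; rfl) ≫
        (mapCtx G (X := X.and A) (Y := Y.and A) (f.pr (Mor.id (tF A)))).cls ≫
        eqToHom (by rw [Ctx.subst_fill]; rfl) :=
  cls_mapCtx_subst G _ f

theorem cls_mapCtx_subst_conR (G : Ctx) (A : Fml) {X Y : Fml} (f : Mor (tF X) (tF Y)) :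
    (mapCtx (G.subst (.conR A .box)) f).cls
      = eqToHom (by rw [Ctx.subst_fill]; rfl) ≫
        (mapCtx G (X := A.and X) (Y := A.and Y) ((Mor.id (tF A)).pr f)).cls ≫
        eqToHom (by rw [Ctx.subst_fill]; rfl) :=
  cls_mapCtx_subst G _ f

end Contexts

section Translation

variable {A A' B C : Fml}

@[simp] theorem cls_tP_mix (G : Ctx) (π₁ : JPf A B) (π₂ : JPf (G.fill B) C) :
    (tP (.mix G π₁ π₂)).cls = (mapCtx G (tP π₁)).cls ≫ (tP π₂).cls :=
  rfl

theorem cls_tP_thin (F : Ctx) (hF : F.boxes = 1) (π : JPf (F.fill .top) B) :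
    (tP (.thin F hF A π)).cls
      = (mapCtx F (X := A) (Y := .top) (Mor.bang (tF A))).cls ≫ (tP π).cls :=
  rfl

theorem cls_tP_recast (h : A = A') (π : JPf A B) :
    (tP (recast h rfl π)).cls = eqToHom (congrArg tF h).symm ≫ (tP π).cls := by
  subst h
  simp [recast]

theorem tP_ctxAp (G : Ctx) (π : JPf A B) : tP (ctxAp G π) = mapCtx G (tP π) := by
  induction G <;> simp_all [ctxAp, mapCtx, tP] <;> rfl

end Translation

/-- Lemma 5.15 of the paper.  Each step of the mix-elimination
procedure for the sequent system `𝒥` preserves the translation `t` into the free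
bicartesian closed category `ℬ`: if a proof `π` is transformed into a proof `π′` by
one reduction step of the procedure, then `t(π) = t(π′)` holds in `ℬ`. -/
theorem elimStep_preserves_t {A B : Fml} (π π' : JPf A B) (h : ElimStep π π') :
    BEq (tP π) (tP π') := by
  rw [← Mor.cls_eq_cls]
  -- The identities below are matched against `tP` only up to unfolding, so the morphisms
  -- must be supplied explicitly.
  cases h with
  | e111 G π₂ => simp [tP, cls_mapCtx_id]
  | e112 G π₁ => simp [tP, tP_ctxAp]
  | e113 G π₂ => exact (isInitialFillBot G).hom_ext _ _
  | e114 π₁ => exact isInitialZero.hom_ext _ _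
  | e12 G π₁' π₁'' π₂ =>
    simp only [cls_tP_recast, cls_tP_mix, cls_mapCtx_subst_conL, cls_mapCtx_subst_conR,
      Category.assoc, eqToHom_trans_assoc, eqToHom_refl, Category.id_comp]
    exact (congrArg (· ≫ (tP π₂).cls) (cls_mapCtx_pr G (tP π₁') (tP π₁''))).trans
      (Category.assoc _ _ _)
  | e131 F G₁ hF π₁ π₂' =>
    simp only [cls_tP_mix, cls_tP_recast, cls_tP_thin, cls_mapCtx_subst, Category.assoc,
      eqToHom_trans_assoc, eqToHom_refl, Category.id_comp]
    rw [reassoc_of% cls_mapCtx_comp_bang]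
  | e132 π₁' π₂' π₂'' =>
    exact prodMap_curry_comp_triMap (tP π₁').cls (tP π₂').cls (tP π₂'').cls
  | e142l π₁' π₂' π₂'' =>
    exact prodMap_comp_inl_comp_orElim (tP π₁').cls (tP π₂').cls (tP π₂'').cls
  | e142r π₁' π₂' π₂'' =>
    exact prodMap_comp_inr_comp_orElim (tP π₁').cls (tP π₂').cls (tP π₂'').cls
  | e212 G₁ G₂ π₁ π₂' π₂'' =>
    exact prodMap_comp_prodMap (mapCtx G₁ (tP π₁)).cls (mapCtx G₂ (tP π₁)).cls
      (tP π₂').cls (tP π₂'').cls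
  | e213 G π₁ π₂' => exact curry_natural_left (mapCtx G (tP π₁)).cls (tP π₂').cls
  | e2141 G₁ G₂ π₁ π₂' π₂'' =>
    exact prodMap_prodMap_comp_triMap (mapCtx G₁ (tP π₁)).cls (tP π₁).cls
      (mapCtx G₂ (tP π₁)).cls (tP π₂').cls (tP π₂'').cls
  | e2142 G₁ π₁ π₂' π₂'' =>
    exact prodMap_comp_triMap (tP π₁).cls (mapCtx G₁ (tP π₁)).cls (tP π₂').cls (tP π₂'').cls
  | e2143 G₁ G₂ π₁ π₂' π₂'' =>
    exact prodMap_prodMap_id_comp_triMap (mapCtx G₁ (tP π₁)).cls (mapCtx G₂ (tP π₁)).cls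
      (tP π₂').cls (tP π₂'').cls
  | e2151 G₁ π₁ π₂' π₂'' =>
    exact prodMap_comp_orElim (tP π₁).cls (mapCtx G₁ (tP π₁)).cls (tP π₂').cls (tP π₂'').cls
  | e2152 G₁ π₁ π₂' π₂'' =>
    exact prodMap_id_comp_orElim (mapCtx G₁ (tP π₁)).cls (tP π₂').cls (tP π₂'').cls
  | e216l G π₁ π₂' =>
    exact (Category.assoc (mapCtx G (tP π₁)).cls (tP π₂').cls (Mor.inl _ _).cls).symm
  | e216r G π₁ π₂' =>
    exact (Category.assoc (mapCtx G (tP π₁)).cls (tP π₂').cls (Mor.inr _ _).cls).symm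

end JSys
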